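/- Let V be a finite-dimensional real vector space, K ⊆ V a salient closed convex cone, and suppose D₁, …, D_m ∈ K and C₁, …, C_m are linear functionals on V such that for each i: Cᵢ(Dᵢ) < 0, Cᵢ(Dⱼ) = 0 for all j ≠ i, and Cᵢ(x) ≥ 0 for every x ∈ K not lying in the cone generated by D₁, …, D_m. Then the cone generated by D₁, …, D_m is extremal in K: whenever x + y lies in this cone with x, y ∈ K, both x and y lie in it. -/

import Mathlib

/-! Since `Cᵢ(∑ sⱼ Dⱼ) = sᵢ Cᵢ(Dᵢ)` with `Cᵢ(Dᵢ) < 0`, a combination of the `Dⱼ` on which every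
`Cᵢ` is nonnegative has nonpositive coefficients, so its negative lies in `finConeGen D`. If
`x ∉ finConeGen D`, all `Cᵢ(x) ≥ 0`. When `y ∈ finConeGen D`, `x = (x + y) - y` is such a
combination, so `-x ∈ finConeGen D ⊆ K ∪ {0}`; otherwise also `Cᵢ(y) ≥ 0` and the same applies
to `x + y`. Either way salience of `K` forces a contradiction. -/

open Finset

/-- The convex cone generated by finitely many vectors `D₁, …, Dₘ`: all finite
nonnegative combinations. -/
def finConeGen {V : Type*} [AddCommGroup V] [Module ℝ V] {m : ℕ} (D : Fin m → V) :
    Set V :=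
  {x | ∃ t : Fin m → ℝ, (∀ i, 0 ≤ t i) ∧ x = ∑ i, t i • D i}

section FinConeGen

variable {V : Type*} [AddCommGroup V] [Module ℝ V] {m : ℕ} {D : Fin m → V}

theorem zero_mem_finConeGen : (0 : V) ∈ finConeGen D :=
  ⟨0, fun _ => le_rfl, by simp⟩

theorem eq_zero_or_mem_of_mem_finConeGen {K : ConvexCone ℝ V} (hD : ∀ i, D i ∈ K) {z : V}
    (hz : z ∈ finConeGen D) : z = 0 ∨ z ∈ K := by
  obtain ⟨t, ht, rfl⟩ := hz
  refine Finset.sum_induction _ (fun z => z = 0 ∨ z ∈ K) ?_ (Or.inl rfl) fun i _ => ?_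
  · rintro a b (rfl | ha) (rfl | hb)
    exacts [Or.inl (add_zero 0), Or.inr (by simpa), Or.inr (by simpa), Or.inr (K.add_mem ha hb)]
  · rcases (ht i).eq_or_lt with hti | hti
    · exact Or.inl (by simp [← hti])
    · exact Or.inr (K.smul_mem hti (hD i))

theorem eq_zero_of_neg_mem_finConeGen {K : ConvexCone ℝ V} (hK : K.Salient)
    (hD : ∀ i, D i ∈ K) {z : V} (hz : z ∈ K) (hnz : -z ∈ finConeGen D) : z = 0 := by
  by_contra hz0
  exact (eq_zero_or_mem_of_mem_finConeGen hD hnz).elim (fun h => hz0 (neg_eq_zero.mp h))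
    (hK z hz hz0)

variable {C : Fin m → V →ₗ[ℝ] ℝ}

theorem apply_sum_smul_of_apply_eq_zero (hzero : ∀ i j, j ≠ i → C i (D j) = 0)
    (s : Fin m → ℝ) (i : Fin m) : C i (∑ j, s j • D j) = s i * C i (D i) := by
  rw [map_sum, Finset.sum_eq_single i (fun j _ hj => by simp [hzero i j hj]) (by simp)]
  simp

theorem neg_mem_finConeGen_of_forall_nonneg (hneg : ∀ i, C i (D i) < 0)
    (hzero : ∀ i j, j ≠ i → C i (D j) = 0) (s : Fin m → ℝ)
    (hs : ∀ i, 0 ≤ C i (∑ j, s j • D j)) : -∑ j, s j • D j ∈ finConeGen D := by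
  refine ⟨-s, fun i => ?_, by simp [← Finset.sum_neg_distrib]⟩
  have := hs i
  rw [apply_sum_smul_of_apply_eq_zero hzero] at this
  simpa using nonpos_of_mul_nonneg_left this (hneg i)

end FinConeGen

theorem finitely_generated_cone_extremal_general
    {V : Type*} [NormedAddCommGroup V] [NormedSpace ℝ V]
    (K : ConvexCone ℝ V)
    (hKsalient : ∀ x ∈ K, x ≠ 0 → -x ∉ K)
    (m : ℕ) (D : Fin m → V) (hD : ∀ i, D i ∈ K)
    (C : Fin m → (V →ₗ[ℝ] ℝ))
    (hneg : ∀ i, C i (D i) < 0)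
    (hzero : ∀ i j, j ≠ i → C i (D j) = 0)
    (hnonneg : ∀ i, ∀ x ∈ K, x ∉ finConeGen D → 0 ≤ C i x) :
    ∀ x y : V, x ∈ K → y ∈ K → x + y ∈ finConeGen D →
      x ∈ finConeGen D ∧ y ∈ finConeGen D := by
  suffices h : ∀ x y, x ∈ K → y ∈ K → x + y ∈ finConeGen D → x ∈ finConeGen D from
    fun x y hx hy hxy => ⟨h x y hx hy hxy, h y x hy hx (add_comm x y ▸ hxy)⟩
  rintro x y hx hy ⟨t, -, hxy⟩
  by_contra hx'
  have hx0 : x ≠ 0 := fun h => hx' (h ▸ zero_mem_finConeGen)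
  have hCx i : 0 ≤ C i x := hnonneg i x hx hx'
  by_cases hy' : y ∈ finConeGen D
  · obtain ⟨u, -, rfl⟩ := hy'
    have hx_eq : x = ∑ i, (t i - u i) • D i := by
      simp only [sub_smul, sum_sub_distrib, ← hxy, add_sub_cancel_right]
    refine hx0 (eq_zero_of_neg_mem_finConeGen hKsalient hD hx ?_)
    rw [hx_eq] at hCx ⊢
    exact neg_mem_finConeGen_of_forall_nonneg hneg hzero _ hCx
  · have hCxy i : 0 ≤ C i (x + y) := by
      rw [map_add]; exact add_nonneg (hCx i) (hnonneg i y hy hy')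
    rw [hxy] at hCxy
    have hxy0 : x + y = 0 := eq_zero_of_neg_mem_finConeGen hKsalient hD (K.add_mem hx hy)
      (hxy ▸ neg_mem_finConeGen_of_forall_nonneg hneg hzero t hCxy)
    exact hKsalient x hx hx0 (neg_eq_of_add_eq_zero_right hxy0 ▸ hy)

/-- (Rulla's Lemma 1.4.6, abstract form.)  Let `K` be a salient closed convex cone in a
finite-dimensional real vector space, `D₁, …, Dₘ ∈ K`, and `C₁, …, Cₘ` linear functionals
such that `Cᵢ(Dᵢ) < 0`, `Cᵢ(Dⱼ) = 0` for `j ≠ i`, and `Cᵢ ≥ 0` on every element of `K`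
not lying in the cone generated by the `Dⱼ`.  Then the cone generated by `D₁, …, Dₘ` is
extremal in `K`: if `x + y` lies in it with `x, y ∈ K`, then so do `x` and `y`. -/
theorem finitely_generated_cone_extremal
    {V : Type*} [NormedAddCommGroup V] [NormedSpace ℝ V] [FiniteDimensional ℝ V]
    (K : ConvexCone ℝ V) (hKclosed : IsClosed (K : Set V))
    (hKsalient : ∀ x ∈ K, x ≠ 0 → -x ∉ K)
    (m : ℕ) (D : Fin m → V) (hD : ∀ i, D i ∈ K)
    (C : Fin m → (V →ₗ[ℝ] ℝ))
    (hneg : ∀ i, C i (D i) < 0)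
    (hzero : ∀ i j, j ≠ i → C i (D j) = 0)
    (hnonneg : ∀ i, ∀ x ∈ K, x ∉ finConeGen D → 0 ≤ C i x) :
    ∀ x y : V, x ∈ K → y ∈ K → x + y ∈ finConeGen D →
      x ∈ finConeGen D ∧ y ∈ finConeGen D :=
  finitely_generated_cone_extremal_general K hKsalient m D hD C hneg hzero hnonneg
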